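/- arXiv:0905.0769 — 2 statements merged into one kernel-verified Lean document; each statement's English description precedes it below -/
import Mathlib

section
/- For λ-terms U and V, the application (U V) is solvable if and only if U is solvable with head normal form U' and (U' V) is solvable. -/
/-!
Head reduction is deterministic, so solvability is invariant along head reduction; head steps are
stable under substitution, so `U[V/x]` solvable forces `U` solvable. If `(U V)` head-reduces to a head
normal form, the reduction either works inside `U` until `U` is in head normal form, or it turns
`U` into `λx.W` and contracts `(λx.W) V` to `W[V/x]`; then `W` is solvable, with head normal form
`W'`, and `U' = λx.W'` works, since `W[V/x]` reduces to `W'[V/x]`. Conversely a head step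
`U →t U₁` either lifts to `(U V) →t (U₁ V)` or, for `U = λx.W`, yields `W[V/x] →t W₁[V/x]`.
-/

/-- Untyped λ-terms in de Bruijn notation. -/
inductive Lam : Type
  | var : ℕ → Lam
  | lam : Lam → Lam
  | app : Lam → Lam → Lam

namespace Lam

/-- Lift (shift by one) the de Bruijn indices ≥ `d`. -/
def lift : Lam → ℕ → Lam
  | var n, d => if n < d then var n else var (n + 1)
  | lam u, d => lam (lift u (d + 1))
  | app u v, d => app (lift u d) (lift v d)

/-- Capture-avoiding substitution `t[s/k]`. -/
def subst : Lam → ℕ → Lam → Lam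
  | var n, k, s => if n = k then s else if k < n then var (n - 1) else var n
  | lam u, k, s => lam (subst u (k + 1) (lift s 0))
  | app u v, k, s => app (subst u k s) (subst v k s)

/-- Head reduction: `λx̄.((λx.U) V) V₁ ... Vₖ →t λx̄.(U[V/x]) V₁ ... Vₖ`. -/
inductive Head : Lam → Lam → Prop
  | beta (u v : Lam) : Head (app (lam u) v) (subst u 0 v)
  | appL {u u' : Lam} (v : Lam) : Head u u' → (∀ w, u ≠ lam w) →
      Head (app u v) (app u' v)
  | abs {u u' : Lam} : Head u u' → Head (lam u) (lam u')

/-- Terms of the form `x V₁ ... Vₖ` for a variable `x`. -/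
inductive VarApp : Lam → Prop
  | var (n : ℕ) : VarApp (var n)
  | app {u : Lam} (v : Lam) : VarApp u → VarApp (app u v)

/-- Head normal forms: `λx₁...λxₘ.(x V₁ ... Vₖ)`. -/
inductive Hnf : Lam → Prop
  | base {t : Lam} : VarApp t → Hnf t
  | lam {t : Lam} : Hnf t → Hnf (lam t)

/-- A λ-term is solvable iff its head reduction reaches a head normal form. -/
def Solvable (t : Lam) : Prop :=
  ∃ t', Relation.ReflTransGen Head t t' ∧ Hnf t'

open Relation

theorem lift_lift (t : Lam) {i j : ℕ} (h : i ≤ j) :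
    lift (lift t i) (j + 1) = lift (lift t j) i := by
  induction t generalizing i j with
  | var n => grind [lift]
  | lam u ih => simp only [lift, ih (Nat.succ_le_succ h)]
  | app u v ihu ihv => simp only [lift, ihu h, ihv h]

theorem subst_lift (t : Lam) (k : ℕ) (s : Lam) : subst (lift t k) k s = t := by
  induction t generalizing k s with
  | var n => grind [lift, subst]
  | lam u ih => simp only [lift, subst, ih]
  | app u v ihu ihv => simp only [lift, subst, ihu, ihv]

theorem lift_subst (t : Lam) {k d : ℕ} (s : Lam) (h : d ≤ k) :
    lift (subst t k s) d = subst (lift t d) (k + 1) (lift s d) := by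
  induction t generalizing k s d with
  | var n => grind [lift, subst]
  | lam u ih =>
    simp only [subst, lift, ih (lift s 0) (Nat.succ_le_succ h), lift_lift s (Nat.zero_le d)]
  | app u v ihu ihv => simp only [subst, lift, ihu s h, ihv s h]

theorem subst_subst (t : Lam) {j m : ℕ} (w s : Lam) (h : j ≤ m) :
    subst (subst t j w) m s = subst (subst t (m + 1) (lift s j)) j (subst w m s) := by
  induction t generalizing j m w s with
  | var n => grind [lift, subst, subst_lift]
  | lam u ih =>
    simp only [subst, ih (lift w 0) (lift s 0) (Nat.succ_le_succ h), lift_lift s (Nat.zero_le j),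
      lift_subst w s (Nat.zero_le m)]
  | app u v ihu ihv => simp only [subst, ihu w s h, ihv w s h]

theorem VarApp.not_head {t t' : Lam} (ht : VarApp t) (h : Head t t') : False := by
  induction ht generalizing t' with
  | var n => cases h
  | app v hu ih =>
    cases h with
    | beta => cases hu
    | appL _ h _ => exact ih h

namespace Head

theorem subst {u u' : Lam} (h : Head u u') (k : ℕ) (s : Lam) :
    Head (u.subst k s) (u'.subst k s) := by
  induction h generalizing k s with
  | beta w v =>
    have := Head.beta (w.subst (k + 1) (lift s 0)) (v.subst k s)
    rwa [← subst_subst w v s (Nat.zero_le k)] at this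
  | @appL a _ v ha hne ih =>
    refine Head.appL (v.subst k s) (ih k s) fun w hw => ?_
    cases a with
    | var n => exact ((VarApp.var n).not_head ha).elim
    | lam b => exact hne b rfl
    | app => cases hw
  | abs _ ih => exact Head.abs (ih (k + 1) (lift s 0))

theorem right_unique : Relator.RightUnique Head := by
  intro t a b h1 h2
  induction h1 generalizing b with
  | beta u v =>
    cases h2 with
    | beta => rfl
    | appL _ _ hne => exact absurd rfl (hne u)
  | appL v _ hne ih =>
    cases h2 with
    | beta u => exact absurd rfl (hne u)
    | appL _ h2 _ => rw [ih h2]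
  | abs _ ih =>
    cases h2 with
    | abs h2 => rw [ih h2]

end Head

theorem Hnf.not_head {t t' : Lam} (ht : Hnf t) (h : Head t t') : False := by
  induction ht generalizing t' with
  | base hv => exact hv.not_head h
  | lam _ ih => cases h with | abs h => exact ih h

theorem Hnf.eq_of_reflTransGen {t t' : Lam} (ht : Hnf t) (h : ReflTransGen Head t t') :
    t = t' :=
  h.cases_head.resolve_right fun ⟨_, hs, _⟩ => ht.not_head hs

theorem hnf_or_exists_head (t : Lam) : Hnf t ∨ ∃ t', Head t t' := by
  induction t with
  | var n => exact Or.inl (.base (.var n))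
  | lam u ih => exact ih.imp Hnf.lam fun ⟨u', h⟩ => ⟨lam u', h.abs⟩
  | app u v ihu _ =>
    rcases ihu with (hu | hu) | ⟨u', hu⟩
    · exact Or.inl (.base (hu.app v))
    · exact Or.inr ⟨_, .beta _ v⟩
    · cases u with
      | var n => exact ((VarApp.var n).not_head hu).elim
      | lam w => exact Or.inr ⟨_, .beta w v⟩
      | app => exact Or.inr ⟨_, .appL v hu fun _ => nofun⟩

theorem reflTransGen_head_lam {u u' : Lam} (h : ReflTransGen Head u u') :
    ReflTransGen Head (lam u) (lam u') :=
  h.lift lam fun _ _ => Head.abs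

theorem reflTransGen_head_subst {u u' : Lam} (h : ReflTransGen Head u u') (k : ℕ) (s : Lam) :
    ReflTransGen Head (u.subst k s) (u'.subst k s) :=
  h.lift (subst · k s) fun _ _ hab => hab.subst k s

theorem Hnf.solvable {t : Lam} (ht : Hnf t) : Solvable t := ⟨t, .refl, ht⟩

namespace Solvable

theorem of_head {t t' : Lam} (h : Head t t') (ht' : Solvable t') : Solvable t :=
  let ⟨T, hT, hTn⟩ := ht'
  ⟨T, hT.head h, hTn⟩

theorem of_reflTransGen {t t' : Lam} (ht : Solvable t) (h : ReflTransGen Head t t') :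
    Solvable t' := by
  obtain ⟨T, hT, hTn⟩ := ht
  rcases ReflTransGen.total_of_right_unique Head.right_unique h hT with h' | h'
  · exact ⟨T, h', hTn⟩
  · exact hTn.eq_of_reflTransGen h' ▸ hTn.solvable

theorem app_lam_iff {u v : Lam} : Solvable (app (lam u) v) ↔ Solvable (u.subst 0 v) :=
  ⟨fun h => h.of_reflTransGen (.single (.beta u v)), of_head (.beta u v)⟩

theorem head_induction_on {P : Lam → Prop} {t : Lam} (ht : Solvable t)
    (hnf : ∀ {t}, Hnf t → P t) (head : ∀ {t t'}, Head t t' → Solvable t' → P t' → P t) : P t := by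
  obtain ⟨T, hT, hTn⟩ := ht
  induction hT using ReflTransGen.head_induction_on with
  | refl => exact hnf hTn
  | head h hT ih => exact head h ⟨T, hT, hTn⟩ ih

theorem of_subst {u : Lam} {k : ℕ} {s : Lam} (h : Solvable (u.subst k s)) : Solvable u := by
  refine h.head_induction_on (P := fun t => ∀ u, u.subst k s = t → Solvable u) ?_ ?_ u rfl
  · rintro _ hnf u rfl
    refine (hnf_or_exists_head u).elim Hnf.solvable fun ⟨u', hu⟩ => ?_
    exact (hnf.not_head (hu.subst k s)).elim
  · rintro _ _ hstep _ ih u rfl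
    refine (hnf_or_exists_head u).elim Hnf.solvable fun ⟨u', hu⟩ => ?_
    exact of_head hu (ih u' (Head.right_unique hstep (hu.subst k s)).symm)

theorem exists_hnf_of_app {U V : Lam} (h : Solvable (app U V)) :
    ∃ U', ReflTransGen Head U U' ∧ Hnf U' ∧ Solvable (app U' V) := by
  refine h.head_induction_on
    (P := fun t => ∀ U, t = app U V → ∃ U', ReflTransGen Head U U' ∧ Hnf U' ∧ Solvable (app U' V))
    ?_ ?_ U rfl
  · rintro _ hnf U rfl
    cases hnf with
    | base hv =>
      cases hv with | app _ hU => exact ⟨U, .refl, .base hU, (Hnf.base (hU.app V)).solvable⟩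
  · rintro _ _ hstep ht' ih U rfl
    cases hstep with
    | beta u _ =>
      obtain ⟨u', hu, hu'⟩ := of_subst ht'
      exact ⟨lam u', reflTransGen_head_lam hu, hu'.lam,
        app_lam_iff.2 (ht'.of_reflTransGen (reflTransGen_head_subst hu 0 V))⟩
    | appL _ hU _ =>
      obtain ⟨U', hU', hnf, hs⟩ := ih _ rfl
      exact ⟨U', hU'.head hU, hnf, hs⟩

theorem app_of_head {U U' V : Lam} (hU : Head U U') (h : Solvable (app U' V)) :
    Solvable (app U V) := by
  cases U with
  | var n => exact ((VarApp.var n).not_head hU).elim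
  | lam w =>
    cases hU with
    | abs hw => exact app_lam_iff.2 (of_head (hw.subst 0 V) (app_lam_iff.1 h))
  | app => exact of_head (.appL V hU fun _ => nofun) h

theorem app_of_reflTransGen {U U' V : Lam} (hU : ReflTransGen Head U U')
    (h : Solvable (app U' V)) : Solvable (app U V) :=
  hU.head_induction_on h fun hU _ ih => app_of_head hU ih

end Solvable

end Lam

/-- `(U V)` is solvable iff `U` is solvable with head normal form `U'`
and `(U' V)` is solvable. -/
theorem app_solvable_iff (U V : Lam) :
    Lam.Solvable (.app U V) ↔
      ∃ U', Relation.ReflTransGen Lam.Head U U' ∧ Lam.Hnf U' ∧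
        Lam.Solvable (.app U' V) :=
  ⟨Lam.Solvable.exists_hnf_of_app, fun ⟨_, hU, _, h⟩ => Lam.Solvable.app_of_reflTransGen hU h⟩
end

section
/- For all λH-terms U and V and every variable x, E(U[V/x]) = E(E(U)[E(V)/x]). -/
/-!
Three facts about the extraction map drive the proof: `E` is idempotent, it commutes with
lifting, and `E (U V)` depends only on `E U` and `E V`. Substitution and lifting act on the
application spine homomorphically, so they preserve a head `H` and commute with erasing it.
Induction along the recursion of `E` then closes the argument: for an `H`-headed application
both sides reduce to the claim for the term with `H` erased, and otherwise the claims for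
the two components combine through the application law.
-/


/-- λH-terms: untyped λ-terms in de Bruijn notation with a distinguished
constant `H`. -/
inductive LamH : Type
  | var : ℕ → LamH
  | H : LamH
  | lam : LamH → LamH
  | app : LamH → LamH → LamH

namespace LamH

/-- Lift (shift by one) the de Bruijn indices ≥ `d`. -/
def lift : LamH → ℕ → LamH
  | var n, d => if n < d then var n else var (n + 1)
  | H, _ => H
  | lam u, d => lam (lift u (d + 1))
  | app u v, d => app (lift u d) (lift v d)

/-- Capture-avoiding substitution `t[s/k]`. -/
def subst : LamH → ℕ → LamH → LamH
  | var n, k, s => if n = k then s else if k < n then var (n - 1) else var n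
  | H, _, _ => H
  | lam u, k, s => lam (subst u (k + 1) (lift s 0))
  | app u v, k, s => app (subst u k s) (subst v k s)

/-- Head reduction `→t` contracting the head β-redex:
`λx̄.((λx.U) V) V₁ ... Vₖ →t λx̄.(U[V/x]) V₁ ... Vₖ`. -/
inductive Head : LamH → LamH → Prop
  | beta (u v : LamH) : Head (app (lam u) v) (subst u 0 v)
  | appL {u u' : LamH} (v : LamH) : Head u u' → (∀ w, u ≠ lam w) →
      Head (app u v) (app u' v)
  | abs {u u' : LamH} : Head u u' → Head (lam u) (lam u')

/-- `headH t = true` iff `t` is of the form `H U₁ U₂ ... Uₙ` with `n ≥ 0`. -/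
def headH : LamH → Bool
  | H => true
  | app u _ => headH u
  | _ => false

/-- Remove the head occurrence of `H`: `dropH (H U₁ U₂ ... Uₙ) = U₁ U₂ ... Uₙ`
(for `n ≥ 1`). -/
def dropH : LamH → LamH
  | app H v => v
  | app u v => app (dropH u) v
  | t => t

theorem dropH_app_size_lt : ∀ u v : LamH, headH u = true →
    sizeOf (dropH (app u v)) < sizeOf (app u v) := by
  intro u
  induction u with
  | var n => intro v h; simp [headH] at h
  | H => intro v _; simp [dropH]
  | lam u ih => intro v h; simp [headH] at h
  | app u1 u2 ih1 ih2 =>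
    intro v h
    have h1 : headH u1 = true := by simpa [headH] using h
    have : dropH (app (app u1 u2) v) = app (dropH (app u1 u2)) v := by
      cases u1 <;> rfl
    rw [this]
    have := ih1 u2 h1
    simp only [app.sizeOf_spec] at *
    omega

/-- The extraction map `E`: it erases `H` in head position of an application.
`E(x) = x`, `E(H) = H`, `E(λx.U) = λx.E(U)`,
`E(U V) = (E(U) E(V))` if `U` is not of the form `H U₁ ... Uₙ`, and
`E(H U₁ U₂ ... Uₙ) = E(U₁ U₂ ... Uₙ)`. -/
def E : LamH → LamH
  | var n => var n
  | H => H
  | lam u => lam (E u)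
  | app u v =>
    if h : headH u = true then E (dropH (app u v)) else app (E u) (E v)
termination_by t => sizeOf t
decreasing_by
  all_goals first
    | exact dropH_app_size_lt u v (by assumption)
    | (simp; omega)
    | simp

end LamH

namespace LamH

@[simp] theorem E_var (n : ℕ) : E (var n) = var n := by rw [E]

@[simp] theorem E_H : E H = H := by rw [E]

@[simp] theorem E_lam (u : LamH) : E (lam u) = lam (E u) := by rw [E]

theorem E_app_of_headH {u : LamH} (v : LamH) (h : headH u = true) :
    E (app u v) = E (dropH (app u v)) := by rw [E, dif_pos h]

theorem E_app_of_not_headH {u : LamH} (v : LamH) (h : ¬ headH u = true) :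
    E (app u v) = app (E u) (E v) := by rw [E, dif_neg h]

theorem dropH_app_app (u₁ u₂ v : LamH) :
    dropH (app (app u₁ u₂) v) = app (dropH (app u₁ u₂)) v := rfl

@[simp] theorem headH_lift (u : LamH) (d : ℕ) : headH (lift u d) = headH u := by
  induction u generalizing d with
  | var n => by_cases h : n < d <;> simp [lift, headH, h]
  | H => rfl
  | lam u _ => rfl
  | app u v ih => exact ih d

theorem headH_E_of_not_headH {t : LamH} (h : ¬ headH t = true) : ¬ headH (E t) = true := by
  induction t with
  | var n => simp [headH]
  | H => simp [headH] at h
  | lam u _ => simp [headH]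
  | app u v ih _ =>
    have hu : ¬ headH u = true := h
    rw [E_app_of_not_headH v hu]
    exact ih hu

section AppHom

variable (f : LamH → LamH)

theorem headH_map_of_headH (hH : f H = H) (happ : ∀ a b, f (app a b) = app (f a) (f b))
    {u : LamH} (hu : headH u = true) : headH (f u) = true := by
  induction u with
  | H => rw [hH]; rfl
  | app u v ih _ => rw [happ]; exact ih hu
  | _ => simp [headH] at hu

theorem map_dropH (hH : f H = H) (happ : ∀ a b, f (app a b) = app (f a) (f b))
    {u : LamH} (hu : headH u = true) (v : LamH) :
    f (dropH (app u v)) = dropH (app (f u) (f v)) := by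
  induction u generalizing v with
  | H => rw [hH]; rfl
  | app u₁ u₂ ih _ => rw [dropH_app_app, happ, ih hu, happ, dropH_app_app]
  | _ => simp [headH] at hu

end AppHom

theorem E_E (t : LamH) : E (E t) = E t := by
  induction t using E.induct with
  | case1 n => simp
  | case2 => simp
  | case3 u ih => simp [ih]
  | case4 u v h ih => rwa [E_app_of_headH v h]
  | case5 u v h ihu ihv =>
    rw [E_app_of_not_headH v h, E_app_of_not_headH _ (headH_E_of_not_headH h), ihu, ihv]

theorem E_lift (t : LamH) (d : ℕ) : E (lift t d) = lift (E t) d := by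
  induction t using E.induct generalizing d with
  | case1 n => by_cases h : n < d <;> simp [lift, h]
  | case2 => simp [lift]
  | case3 u ih => simp [lift, ih]
  | case4 u v h ih =>
    rw [lift, E_app_of_headH (u := lift u d) _ (by simpa using h),
      ← map_dropH (lift · d) rfl (fun _ _ => rfl) h, ih, E_app_of_headH v h]
  | case5 u v h ihu ihv =>
    rw [lift, E_app_of_not_headH (u := lift u d) _ (by simpa using h), E_app_of_not_headH v h,
      ihu, ihv, lift]

theorem E_app_E_E (a b : LamH) : E (app (E a) (E b)) = E (app a b) := by
  induction a using E.induct generalizing b with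
  | case1 n => simp [E_app_of_not_headH, headH, E_E]
  | case2 =>
    rw [E_H, E_app_of_headH _ rfl, E_app_of_headH _ rfl]
    exact E_E b
  | case3 u _ => simp [E_app_of_not_headH, headH, E_E]
  | case4 u v h ih =>
    rw [E_app_of_headH v h, ih, E_app_of_headH (u := app u v) b h, dropH_app_app]
  | case5 u v h _ _ =>
    have hE := headH_E_of_not_headH h
    rw [E_app_of_not_headH v h, E_app_of_not_headH (u := app (E u) (E v)) _ hE,
      E_app_of_not_headH (u := E u) _ hE, E_app_of_not_headH (u := app u v) b h,
      E_app_of_not_headH v h, E_E, E_E, E_E]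

theorem E_subst_E_E (U V : LamH) (x : ℕ) : E (subst (E U) x (E V)) = E (subst U x V) := by
  induction U using E.induct generalizing x V with
  | case1 n => by_cases h : n = x <;> simp [subst, h, E_E]
  | case2 => simp [subst]
  | case3 u ih => simp [subst, ← E_lift, ih]
  | case4 u v h ih =>
    rw [E_app_of_headH v h, ih, map_dropH (subst · x V) rfl (fun _ _ => rfl) h, subst,
      E_app_of_headH _ (headH_map_of_headH (subst · x V) rfl (fun _ _ => rfl) h)]
  | case5 u v h ihu ihv =>
    rw [E_app_of_not_headH v h, subst, ← E_app_E_E, ihu, ihv, E_app_E_E, subst]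

end LamH

/-- For all λH-terms `U`, `V` and every variable `x`,
`E(U[V/x]) = E(E(U)[E(V)/x])`. -/
theorem E_subst (U V : LamH) (x : ℕ) :
    LamH.E (LamH.subst U x V) = LamH.E (LamH.subst (LamH.E U) x (LamH.E V)) :=
  (LamH.E_subst_E_E U V x).symm
end
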